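/- For every f ∈ L²(ℝ,ℂ), the integral ∫_ℝ conj(f(x)) e^{√2·xz − x²/2} dx converges absolutely for every z ∈ ℂ, and the Bargmann transform z ↦ L_ℂ f(z) is an entire function of z. -/

import Mathlib

open MeasureTheory Real Nat

/-!
Writing the kernel as `e^{-x²/2} e^{x·√2z}` exhibits the transform as a two-sided Laplace
transform of `g = conj f · e^{-x²/2}`. Since `e^{c|x| - x²/2}` is square integrable for every `c`,
Cauchy–Schwarz makes `g e^{c|x|}` integrable for every `c`; this exponential decay of `g` gives
absolute convergence for all `z`, and, because `|x| e^{r|x|} ≤ e^{(r+1)|x|}`, a locally uniform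
integrable bound on the `z`-derivative, so one may differentiate under the integral sign.
-/

/-- The Bargmann transform `L_ℂ f(z) = (e^{−z²/2}/π^{1/4}) ∫_ℝ conj(f(x)) e^{√2·xz − x²/2} dx`. -/
noncomputable def bargmann (f : ℝ → ℂ) (z : ℂ) : ℂ :=
  Complex.exp (-z ^ 2 / 2) / ((π ^ ((1 : ℝ) / 4) : ℝ) : ℂ) *
    ∫ x : ℝ, (starRingEnd ℂ) (f x) *
      Complex.exp ((Real.sqrt 2 : ℂ) * (x : ℂ) * z - (x : ℂ) ^ 2 / 2)

lemma norm_cexp_ofReal_mul_le (x : ℝ) (z : ℂ) : ‖Complex.exp (x * z)‖ ≤ rexp (‖z‖ * |x|) := by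
  calc ‖Complex.exp (x * z)‖ ≤ rexp ‖(x : ℂ) * z‖ := Complex.norm_exp_le_exp_norm _
    _ = rexp (‖z‖ * |x|) := by rw [norm_mul, Complex.norm_real, Real.norm_eq_abs, mul_comm]

section LaplaceTransform

variable {μ : Measure ℝ} {g : ℝ → ℂ}

lemma integrable_mul_cexp_ofReal_mul (hg : AEStronglyMeasurable g μ)
    (hexp : ∀ c : ℝ, Integrable (fun x => ‖g x‖ * rexp (c * |x|)) μ) (z : ℂ) :
    Integrable (fun x => g x * Complex.exp (x * z)) μ := by
  refine (hexp ‖z‖).mono' (hg.mul (by fun_prop)) (Filter.Eventually.of_forall fun x => ?_)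
  rw [norm_mul]
  gcongr
  exact norm_cexp_ofReal_mul_le x z

lemma differentiable_integral_mul_cexp_ofReal_mul (hg : AEStronglyMeasurable g μ)
    (hexp : ∀ c : ℝ, Integrable (fun x => ‖g x‖ * rexp (c * |x|)) μ) :
    Differentiable ℂ (fun z => ∫ x, g x * Complex.exp (x * z) ∂μ) := by
  intro z₀
  have h_bound : ∀ x : ℝ, ∀ z ∈ Metric.ball z₀ 1,
      ‖g x * (x * Complex.exp (x * z))‖ ≤ ‖g x‖ * rexp ((‖z₀‖ + 2) * |x|) := by
    intro x z hz
    have hz : ‖z‖ ≤ ‖z₀‖ + 1 := by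
      have := norm_le_norm_add_norm_sub' z z₀
      have := mem_ball_iff_norm.mp hz
      linarith
    calc ‖g x * (x * Complex.exp (x * z))‖ = ‖g x‖ * (|x| * ‖Complex.exp (x * z)‖) := by
          rw [norm_mul, norm_mul, Complex.norm_real, Real.norm_eq_abs]
      _ ≤ ‖g x‖ * (rexp |x| * rexp ((‖z₀‖ + 1) * |x|)) := by
          gcongr
          · linarith [Real.add_one_le_exp |x|]
          · exact (norm_cexp_ofReal_mul_le x z).trans (by gcongr)
      _ = ‖g x‖ * rexp ((‖z₀‖ + 2) * |x|) := by rw [← Real.exp_add]; ring_nf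
  have h_deriv : ∀ x : ℝ, ∀ z : ℂ,
      HasDerivAt (fun w => g x * Complex.exp (x * w)) (g x * (x * Complex.exp (x * z))) z := by
    intro x z
    have := ((hasDerivAt_id z).const_mul (x : ℂ)).cexp.const_mul (g x)
    simpa [mul_comm, mul_left_comm] using this
  exact (hasDerivAt_integral_of_dominated_loc_of_deriv_le (Metric.ball_mem_nhds z₀ one_pos)
    (Filter.Eventually.of_forall fun z => (integrable_mul_cexp_ofReal_mul hg hexp z).1)
    (integrable_mul_cexp_ofReal_mul hg hexp z₀) (hg.mul (by fun_prop))
    (Filter.Eventually.of_forall (h_bound ·)) (hexp _)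
    (Filter.Eventually.of_forall fun x z _ => h_deriv x z)).2.differentiableAt

end LaplaceTransform

lemma memLp_exp_mul_abs_sub_sq_div_two (c : ℝ) :
    MemLp (fun x : ℝ => rexp (c * |x| - x ^ 2 / 2)) 2 volume := by
  have hmeas : AEStronglyMeasurable (fun x : ℝ => rexp (c * |x| - x ^ 2 / 2)) volume := by
    fun_prop
  rw [memLp_two_iff_integrable_sq hmeas]
  refine ((integrable_exp_neg_mul_sq (b := 1 / 2) (by norm_num)).const_mul
    (rexp (2 * c ^ 2))).mono' (hmeas.pow 2) (Filter.Eventually.of_forall fun x => ?_)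
  -- AM-GM: `2c|x| - x² ≤ 2c² - x²/2`
  rw [Real.norm_eq_abs, abs_of_nonneg (by positivity), ← Real.exp_nat_mul, ← Real.exp_add]
  gcongr
  push_cast
  nlinarith [sq_nonneg (2 * c - |x|), sq_abs x]

lemma norm_cexp_neg_sq_div_two (x : ℝ) : ‖Complex.exp (-(x : ℂ) ^ 2 / 2)‖ = rexp (-x ^ 2 / 2) := by
  rw [← Complex.norm_exp_ofReal]
  push_cast
  rfl

/-- For `f ∈ L²(ℝ,ℂ)`, the integral `∫_ℝ conj(f(x)) e^{√2·xz − x²/2} dx` converges absolutely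
for every `z ∈ ℂ` (i.e. the integrand is Bochner integrable), and the Bargmann transform
`z ↦ L_ℂ f(z)` is an entire function of `z`. -/
theorem bargmann_integrable_and_entire (f : ℝ → ℂ) (hf : MemLp f 2 (volume : Measure ℝ)) :
    (∀ z : ℂ, Integrable (fun x : ℝ => (starRingEnd ℂ) (f x) *
        Complex.exp ((Real.sqrt 2 : ℂ) * (x : ℂ) * z - (x : ℂ) ^ 2 / 2)) volume) ∧
      Differentiable ℂ (bargmann f) := by
  set g : ℝ → ℂ := fun x => (starRingEnd ℂ) (f x) * Complex.exp (-(x : ℂ) ^ 2 / 2)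
  have hg_meas : AEStronglyMeasurable g volume :=
    (Complex.continuous_conj.comp_aestronglyMeasurable hf.1).mul (by fun_prop)
  have hg_exp (c : ℝ) : Integrable (fun x => ‖g x‖ * rexp (c * |x|)) volume := by
    refine (hf.norm.integrable_mul (memLp_exp_mul_abs_sub_sq_div_two c)).congr
      (Filter.Eventually.of_forall fun x => ?_)
    simp only [Pi.mul_apply, g, norm_mul, RCLike.norm_conj, norm_cexp_neg_sq_div_two, mul_assoc,
      ← Real.exp_add]
    ring_nf
  have h_kernel (z : ℂ) : (fun x : ℝ => (starRingEnd ℂ) (f x) *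
      Complex.exp ((Real.sqrt 2 : ℂ) * (x : ℂ) * z - (x : ℂ) ^ 2 / 2))
      = fun x => g x * Complex.exp (x * (Real.sqrt 2 * z)) := by
    funext x
    simp only [g, mul_assoc, ← Complex.exp_add]
    ring_nf
  refine ⟨fun z => h_kernel z ▸ integrable_mul_cexp_ofReal_mul hg_meas hg_exp _, ?_⟩
  have h_bargmann : bargmann f = fun z =>
      Complex.exp (-z ^ 2 / 2) / ((π ^ ((1 : ℝ) / 4) : ℝ) : ℂ) *
        ∫ x, g x * Complex.exp (x * (Real.sqrt 2 * z)) := by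
    funext z
    rw [bargmann, h_kernel]
  rw [h_bargmann]
  exact (by fun_prop : Differentiable ℂ fun z : ℂ => Complex.exp (-z ^ 2 / 2) / _).mul
    ((differentiable_integral_mul_cexp_ofReal_mul hg_meas hg_exp).comp (by fun_prop))
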